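/- arXiv:1806.03709 — 7 statements merged into one kernel-verified Lean document; each statement's English description precedes it below -/
import Mathlib

section
/- For all natural numbers n, 3·J³ₙ + j³ₙ = 2^(n+1), where J³ and j³ are the third-order Jacobsthal and Jacobsthal-Lucas numbers. -/
def J3 : ℕ → ℤ
  | 0 => 0
  | 1 => 1
  | 2 => 1
  | n + 3 => J3 (n + 2) + J3 (n + 1) + 2 * J3 n

def jL3 : ℕ → ℤ
  | 0 => 2
  | 1 => 1
  | 2 => 5
  | n + 3 => jL3 (n + 2) + jL3 (n + 1) + 2 * jL3 n

theorem stmt0 (n : ℕ) : 3 * J3 n + jL3 n = 2 ^ (n + 1) := by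
  induction n using Nat.strong_induction_on with
  | _ n ih =>
    match n with
    | 0 => decide
    | 1 => decide
    | 2 => decide
    | m + 3 =>
      have h0 := ih m (by omega)
      have h1 := ih (m + 1) (by omega)
      have h2 := ih (m + 2) (by omega)
      simp only [J3, jL3]
      ring_nf
      ring_nf at h0 h1 h2
      nlinarith [h0, h1, h2]
end

section
/- For all natural numbers n ≥ 3, j³ₙ − 3·J³ₙ = 2·j³ₙ₋₃. -/
lemma aux : ∀ n, jL3 (n + 3) - 3 * J3 (n + 3) = 2 * jL3 n := by
  intro n
  induction n using Nat.strong_induction_on with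
  | _ n ih =>
    match n with
    | 0 => simp [J3, jL3]
    | 1 => simp [J3, jL3]
    | 2 => norm_num [J3, jL3]
    | m + 3 =>
      have h0 := ih m (by omega)
      have h1 := ih (m + 1) (by omega)
      have h2 := ih (m + 2) (by omega)
      rw [show m + 1 + 3 = m + 4 from rfl] at h1
      rw [show m + 2 + 3 = m + 5 from rfl] at h2
      have e6 : jL3 (m + 3 + 3) = jL3 (m + 5) + jL3 (m + 4) + 2 * jL3 (m + 3) := rfl
      have f6 : J3 (m + 3 + 3) = J3 (m + 5) + J3 (m + 4) + 2 * J3 (m + 3) := rfl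
      have e3 : jL3 (m + 3) = jL3 (m + 2) + jL3 (m + 1) + 2 * jL3 m := rfl
      rw [e6, f6]
      linarith

theorem stmt1 (n : ℕ) (hn : 3 ≤ n) : jL3 n - 3 * J3 n = 2 * jL3 (n - 3) := by
  obtain ⟨m, rfl⟩ := Nat.exists_eq_add_of_le hn
  rw [Nat.add_sub_cancel_left, show 3 + m = m + 3 by ring]
  exact aux m
end

section
/- For all natural numbers n, j³ₙ₊₁ + j³ₙ = 3·J³ₙ₊₂. -/
theorem stmt4 (n : ℕ) : jL3 (n + 1) + jL3 n = 3 * J3 (n + 2) := by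
  induction n using Nat.strong_induction_on with
  | _ n ih =>
    match n with
    | 0 => simp [J3, jL3]
    | 1 => simp [J3, jL3]
    | 2 => simp [J3, jL3]
    | (m+3) =>
      have h0 := ih m (by omega)
      have h1 := ih (m+1) (by omega)
      have h2 := ih (m+2) (by omega)
      simp only [show m+3+1 = m+1+3 from rfl, show m+3+2 = m+2+3 from rfl, J3, jL3] at *
      linarith
end

section
/- For all natural numbers n ≥ 3, (j³ₙ₋₃)² + 3·J³ₙ·j³ₙ = 4ⁿ. -/
def E (n : ℕ) : ℤ := if n % 3 = 0 then -2 else if n % 3 = 1 then 3 else -1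

lemma E_add3 (n : ℕ) : E (n + 3) = E n := by
  simp [E, Nat.add_mod]

lemma E_sum (n : ℕ) : E n + E (n + 1) + E (n + 2) = 0 := by
  have h : n % 3 = 0 ∨ n % 3 = 1 ∨ n % 3 = 2 := by omega
  rcases h with h | h | h <;> simp [E, Nat.add_mod, h]

lemma key : ∀ n, 7 * J3 n = 2 ^ (n + 1) + E n ∧ 7 * jL3 n = 2 ^ (n + 3) - 3 * E n := by
  intro n
  induction n using Nat.strong_induction_on with
  | _ n ih =>
    match n with
    | 0 => norm_num [J3, jL3, E]
    | 1 => norm_num [J3, jL3, E]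
    | 2 => norm_num [J3, jL3, E]
    | (m + 3) =>
      obtain ⟨h1, h2⟩ := ih m (by omega)
      obtain ⟨h3, h4⟩ := ih (m + 1) (by omega)
      obtain ⟨h5, h6⟩ := ih (m + 2) (by omega)
      have hs := E_sum m
      have he := E_add3 m
      constructor
      · show 7 * (J3 (m + 2) + J3 (m + 1) + 2 * J3 m) = _
        rw [he]
        ring_nf
        ring_nf at h1 h3 h5 hs ⊢
        linarith
      · show 7 * (jL3 (m + 2) + jL3 (m + 1) + 2 * jL3 m) = _
        rw [he]
        ring_nf
        ring_nf at h2 h4 h6 hs ⊢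
        linarith

theorem stmt6 (n : ℕ) (hn : 3 ≤ n) :
    (jL3 (n - 3)) ^ 2 + 3 * J3 n * jL3 n = 4 ^ n := by
  obtain ⟨m, rfl⟩ : ∃ m, n = m + 3 := ⟨n - 3, by omega⟩
  have hsub : m + 3 - 3 = m := by omega
  rw [hsub]
  obtain ⟨_, h2⟩ := key m
  obtain ⟨hB, hC⟩ := key (m + 3)
  rw [E_add3] at hB hC
  have h2' : (7 * jL3 m) ^ 2 = (2 ^ (m + 3) - 3 * E m) ^ 2 := by rw [h2]
  have hbc : (7 * J3 (m + 3)) * (7 * jL3 (m + 3)) =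
      (2 ^ (m + 3 + 1) + E m) * (2 ^ (m + 3 + 3) - 3 * E m) := by rw [hB, hC]
  have h4p : (4 : ℤ) ^ (m + 3) = 2 ^ (m + 3) * 2 ^ (m + 3) := by
    rw [show (4 : ℤ) = 2 * 2 by norm_num, mul_pow]
  have h49 : (49 : ℤ) * ((jL3 m) ^ 2 + 3 * J3 (m + 3) * jL3 (m + 3)) = 49 * 4 ^ (m + 3) := by
    rw [h4p]
    linear_combination h2' + 3 * hbc
  exact mul_left_cancel₀ (by norm_num) h49
end

section
/- For all natural numbers n, the sum ∑_{k=0}^{n} J³ₖ equals J³ₙ₊₁ − 1 if n ≡ 0 (mod 3) and equals J³ₙ₊₁ otherwise. -/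
lemma J3_diff : ∀ n, J3 (n + 1) - 2 * J3 n =
    (if n % 3 = 0 then 1 else if n % 3 = 1 then -1 else 0) := by
  intro n
  induction n using Nat.strong_induction_on with
  | _ n ih =>
    match n with
    | 0 => simp [J3]
    | 1 => simp [J3]
    | 2 => simp [J3]
    | n + 3 =>
      have h := ih n (by omega)
      have hm : (n + 3) % 3 = n % 3 := by omega
      rw [hm, show n + 3 + 1 = n + 1 + 3 from rfl, J3, J3]
      simp only [show n + 1 + 2 = n + 3 from rfl, show n + 1 + 1 = n + 2 from rfl]
      have h3 : n % 3 = 0 ∨ n % 3 = 1 ∨ n % 3 = 2 := by omega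
      rcases h3 with h3 | h3 | h3 <;> simp [h3] at h ⊢ <;> omega

theorem stmt7 (n : ℕ) :
    ∑ k ∈ Finset.range (n + 1), J3 k =
      if n % 3 = 0 then J3 (n + 1) - 1 else J3 (n + 1) := by
  induction n with
  | zero => simp [J3]
  | succ n ih =>
    rw [Finset.sum_range_succ, ih]
    have h := J3_diff (n + 1)
    have h3 : n % 3 = 0 ∨ n % 3 = 1 ∨ n % 3 = 2 := by omega
    rcases h3 with h3 | h3 | h3 <;>
      [ (have h4 : (n + 1) % 3 = 1 := by omega);
        (have h4 : (n + 1) % 3 = 2 := by omega);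
        (have h4 : (n + 1) % 3 = 0 := by omega) ] <;>
      simp [h3, h4] at h ⊢ <;> omega
end

section
/- For all natural numbers n ≥ 3, (j³ₙ)² − 9·(J³ₙ)² = 2^(n+2)·j³ₙ₋₃. -/
lemma sumlem : ∀ n : ℕ, jL3 n + 3 * J3 n = 2 ^ (n + 1) := by
  have key : ∀ n : ℕ, (jL3 n + 3 * J3 n = 2 ^ (n + 1)) ∧
      (jL3 (n+1) + 3 * J3 (n+1) = 2 ^ (n + 2)) ∧
      (jL3 (n+2) + 3 * J3 (n+2) = 2 ^ (n + 3)) := by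
    intro n
    induction n with
    | zero =>
      refine ⟨?_, ?_, ?_⟩ <;> simp [J3, jL3] <;> norm_num
    | succ k ih =>
      obtain ⟨h1, h2, h3⟩ := ih
      refine ⟨h2, h3, ?_⟩
      have eJ : J3 (k+3) = J3 (k+2) + J3 (k+1) + 2 * J3 k := rfl
      have ej : jL3 (k+3) = jL3 (k+2) + jL3 (k+1) + 2 * jL3 k := rfl
      have p1 : (2:ℤ) ^ (k+2) = 2 ^ (k+1) * 2 := pow_succ 2 (k+1)
      have p2 : (2:ℤ) ^ (k+3) = 2 ^ (k+2) * 2 := pow_succ 2 (k+2)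
      have p3 : (2:ℤ) ^ (k+4) = 2 ^ (k+3) * 2 := pow_succ 2 (k+3)
      show jL3 (k+3) + 3 * J3 (k+3) = 2 ^ (k + 4)
      rw [eJ, ej]
      linarith
  exact fun n => (key n).1

lemma difflem : ∀ n : ℕ, jL3 (n+3) - 3 * J3 (n+3) = 2 * jL3 n := by
  have key : ∀ n : ℕ, (jL3 (n+3) - 3 * J3 (n+3) = 2 * jL3 n) ∧
      (jL3 (n+4) - 3 * J3 (n+4) = 2 * jL3 (n+1)) ∧
      (jL3 (n+5) - 3 * J3 (n+5) = 2 * jL3 (n+2)) := by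
    intro n
    induction n with
    | zero => refine ⟨?_, ?_, ?_⟩ <;> simp [J3, jL3] <;> norm_num
    | succ k ih =>
      obtain ⟨h1, h2, h3⟩ := ih
      refine ⟨h2, h3, ?_⟩
      have eJ : J3 (k+6) = J3 (k+5) + J3 (k+4) + 2 * J3 (k+3) := rfl
      have ej : jL3 (k+6) = jL3 (k+5) + jL3 (k+4) + 2 * jL3 (k+3) := rfl
      have e3 : jL3 (k+3) = jL3 (k+2) + jL3 (k+1) + 2 * jL3 k := rfl
      show jL3 (k+6) - 3 * J3 (k+6) = 2 * jL3 (k+3)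
      rw [eJ, ej]
      linarith
  exact fun n => (key n).1

theorem stmt8 (n : ℕ) (hn : 3 ≤ n) :
    (jL3 n) ^ 2 - 9 * (J3 n) ^ 2 = 2 ^ (n + 2) * jL3 (n - 3) := by
  obtain ⟨m, rfl⟩ := Nat.exists_eq_add_of_le hn
  rw [Nat.add_sub_cancel_left, Nat.add_comm 3 m]
  have h1 := sumlem (m+3)
  have h2 := difflem m
  have key : (jL3 (m+3))^2 - 9 * (J3 (m+3))^2
      = (jL3 (m+3) + 3 * J3 (m+3)) * (jL3 (m+3) - 3 * J3 (m+3)) := by ring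
  rw [key, h1, h2, show (2:ℤ)^(m+3+2) = 2^(m+3+1) * 2 from pow_succ 2 (m+3+1)]
  ring
end

section
/- For all natural numbers n, 7·J³ₙ = 2^(n+1) − Vₙ, where Vₙ = 2 if n ≡ 0 (mod 3), Vₙ = −3 if n ≡ 1 (mod 3), and Vₙ = 1 if n ≡ 2 (mod 3). -/
def V3 (n : ℕ) : ℤ := if n % 3 = 0 then 2 else if n % 3 = 1 then -3 else 1

lemma V3_add_three (n : ℕ) : V3 (n + 3) = V3 n := by
  simp [V3, Nat.add_mod_right]

theorem stmt9 (n : ℕ) : 7 * J3 n = 2 ^ (n + 1) - V3 n := by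
  induction n using Nat.strong_induction_on with
  | _ n ih =>
    match n with
    | 0 => decide
    | 1 => decide
    | 2 => decide
    | n + 3 =>
      have h0 := ih n (by omega)
      have h1 := ih (n + 1) (by omega)
      have h2 := ih (n + 2) (by omega)
      rw [J3, V3_add_three]
      ring_nf
      ring_nf at h0 h1 h2
      have hv1 : V3 n + V3 (1 + n) + V3 (2 + n) = 0 := by
        have h : n % 3 = 0 ∨ n % 3 = 1 ∨ n % 3 = 2 := by omega
        rcases h with h | h | h <;> simp [V3, Nat.add_mod, h]
      linarith
end
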